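/- Let H₁ = p_x p_y + γ₁xy + γ₂/√(xy³) + γ₃/y² and H₂ = (p_x x - p_y y)²/4 - γ₂√(x/y) - γ₃ x/y on the domain x > 0, y > 0. Then {H₁, H₂} = 0 under the canonical Poisson bracket in variables (x, y, p_x, p_y). -/

import Mathlib

noncomputable def pb (F G : ℝ → ℝ → ℝ → ℝ → ℝ) (x y px py : ℝ) : ℝ :=
  deriv (fun t => F x y t py) px * deriv (fun t => G t y px py) x
  - deriv (fun t => F t y px py) x * deriv (fun t => G x y t py) px
  + deriv (fun t => F x y px t) py * deriv (fun t => G x t px py) y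
  - deriv (fun t => F x t px py) y * deriv (fun t => G x y px t) py

noncomputable def H₁new (γ₁ γ₂ γ₃ : ℝ) : ℝ → ℝ → ℝ → ℝ → ℝ :=
  fun x y px py => px*py + γ₁*x*y + γ₂ / Real.sqrt (x*y^3) + γ₃ / y^2

noncomputable def H₂new (γ₂ γ₃ : ℝ) : ℝ → ℝ → ℝ → ℝ → ℝ :=
  fun x y px py => (px*x - py*y)^2/4 - γ₂ * Real.sqrt (x/y) - γ₃ * (x/y)

/-!
The bracket is computed directly: after the substitution `√(x y³) = y² √(x / y)` it becomes a
rational function of `x`, `y`, `p_x`, `p_y` and `√(x / y)` that vanishes identically.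
-/

open Real

theorem HasDerivAt.const_div_sqrt {f : ℝ → ℝ} {f' x : ℝ} (c : ℝ) (hf : HasDerivAt f f' x)
    (hx : 0 < f x) :
    HasDerivAt (fun t => c / √(f t)) (-(c * f') / (2 * f x * √(f x))) x := by
  have hs : 0 < √(f x) := sqrt_pos.2 hx
  refine ((hasDerivAt_const x c).div (hf.sqrt hx.ne') hs.ne').congr_deriv ?_
  rw [sq_sqrt hx.le]
  field_simp
  ring

theorem sqrt_mul_pow_three_eq (x : ℝ) {y : ℝ} (hy : y ≠ 0) :
    √(x * y ^ 3) = y ^ 2 * √(x / y) := by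
  rw [show x * y ^ 3 = (y ^ 2) ^ 2 * (x / y) by field_simp,
    sqrt_mul (by positivity), sqrt_sq (by positivity)]

section PartialDerivatives

variable (γ₁ γ₂ γ₃ : ℝ) {x y px py : ℝ}

theorem deriv_H₁new_px : deriv (fun t => H₁new γ₁ γ₂ γ₃ x y t py) px = py := by
  simp [H₁new]

theorem deriv_H₁new_py : deriv (fun t => H₁new γ₁ γ₂ γ₃ x y px t) py = px := by
  simp [H₁new]

theorem deriv_H₁new_x (h : 0 < x * y ^ 3) :
    deriv (fun t => H₁new γ₁ γ₂ γ₃ t y px py) x = γ₁ * y - γ₂ / (2 * x * √(x * y ^ 3)) := by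
  obtain ⟨hx, hy3⟩ := mul_ne_zero_iff.mp h.ne'
  have hy : y ≠ 0 := pow_ne_zero_iff three_ne_zero |>.mp hy3
  have hs := ((hasDerivAt_id' x).mul_const (y ^ 3)).const_div_sqrt γ₂ h
  rw [(show HasDerivAt (fun t => H₁new γ₁ γ₂ γ₃ t y px py) _ x from
    (((hasDerivAt_id' x).const_mul γ₁).mul_const y).const_add (px * py) |>.add hs
      |>.add_const (γ₃ / y ^ 2)).deriv]
  field_simp
  ring

theorem deriv_H₁new_y (h : 0 < x * y ^ 3) :
    deriv (fun t => H₁new γ₁ γ₂ γ₃ x t px py) y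
      = γ₁ * x - 3 * γ₂ / (2 * y * √(x * y ^ 3)) - 2 * γ₃ / y ^ 3 := by
  obtain ⟨hx, hy3⟩ := mul_ne_zero_iff.mp h.ne'
  have hy : y ≠ 0 := pow_ne_zero_iff three_ne_zero |>.mp hy3
  have hs := ((hasDerivAt_pow 3 y).const_mul x).const_div_sqrt γ₂ h
  have hq := (hasDerivAt_const y γ₃).div (hasDerivAt_pow 2 y) (pow_ne_zero 2 hy)
  rw [(show HasDerivAt (fun t => H₁new γ₁ γ₂ γ₃ x t px py) _ y from
    ((hasDerivAt_id' y).const_mul (γ₁ * x)).const_add (px * py) |>.add hs |>.add hq).deriv]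
  field_simp
  ring

theorem deriv_H₂new_px :
    deriv (fun t => H₂new γ₂ γ₃ x y t py) px = (px * x - py * y) * x / 2 := by
  rw [(show HasDerivAt (fun t => H₂new γ₂ γ₃ x y t py) _ px from
    (((hasDerivAt_id' px).mul_const x).sub_const (py * y)).pow 2 |>.div_const 4
      |>.sub_const (γ₂ * √(x / y)) |>.sub_const (γ₃ * (x / y))).deriv]
  push_cast
  ring

theorem deriv_H₂new_py :
    deriv (fun t => H₂new γ₂ γ₃ x y px t) py = -((px * x - py * y) * y / 2) := by
  rw [(show HasDerivAt (fun t => H₂new γ₂ γ₃ x y px t) _ py from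
    (((hasDerivAt_id' py).mul_const y).const_sub (px * x)).pow 2 |>.div_const 4
      |>.sub_const (γ₂ * √(x / y)) |>.sub_const (γ₃ * (x / y))).deriv]
  push_cast
  ring

theorem deriv_H₂new_x (h : x / y ≠ 0) :
    deriv (fun t => H₂new γ₂ γ₃ t y px py) x
      = (px * x - py * y) * px / 2 - γ₂ / (2 * y * √(x / y)) - γ₃ / y := by
  have hy : y ≠ 0 := (div_ne_zero_iff.mp h).2
  have hq := (hasDerivAt_id' x).div_const y
  rw [(show HasDerivAt (fun t => H₂new γ₂ γ₃ t y px py) _ x from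
    (((hasDerivAt_id' x).const_mul px).sub_const (py * y)).pow 2 |>.div_const 4
      |>.sub ((hq.sqrt h).const_mul γ₂) |>.sub (hq.const_mul γ₃)).deriv]
  field_simp
  ring

theorem deriv_H₂new_y (h : x / y ≠ 0) :
    deriv (fun t => H₂new γ₂ γ₃ x t px py) y
      = -((px * x - py * y) * py / 2) + γ₂ * x / (2 * y ^ 2 * √(x / y)) + γ₃ * x / y ^ 2 := by
  have hy : y ≠ 0 := (div_ne_zero_iff.mp h).2
  have hq : HasDerivAt (fun t => x / t) (-x / y ^ 2) y :=
    ((hasDerivAt_const y x).div (hasDerivAt_id' y) hy).congr_deriv (by ring)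
  rw [(show HasDerivAt (fun t => H₂new γ₂ γ₃ x t px py) _ y from
    (((hasDerivAt_id' y).const_mul py).const_sub (px * x)).pow 2 |>.div_const 4
      |>.sub ((hq.sqrt h).const_mul γ₂) |>.sub (hq.const_mul γ₃)).deriv]
  field_simp
  ring

end PartialDerivatives

theorem stmt9 (γ₁ γ₂ γ₃ : ℝ) (x y px py : ℝ) (hx : 0 < x) (hy : 0 < y) :
    pb (H₁new γ₁ γ₂ γ₃) (H₂new γ₂ γ₃) x y px py = 0 := by
  have hxy : 0 < x / y := div_pos hx hy
  have hr : 0 < √(x / y) := sqrt_pos.2 hxy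
  rw [pb, deriv_H₁new_px, deriv_H₁new_py, deriv_H₁new_x _ _ _ (by positivity),
    deriv_H₁new_y _ _ _ (by positivity), deriv_H₂new_px, deriv_H₂new_py,
    deriv_H₂new_x _ _ hxy.ne', deriv_H₂new_y _ _ hxy.ne', sqrt_mul_pow_three_eq x hy.ne']
  field_simp
  ring
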